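/- The solution of the minimization problem min over diagonal positive matrices P of ‖Id − P⁻¹M‖_F², where M = Θᵀ Θ is symmetric positive semidefinite, is given by P[i,i] = M²[i,i]/M[i,i] whenever M[i,i] ≠ 0 (and P[i,i] arbitrary positive if M[i,i] = 0). -/
import Mathlib


open Matrix Finset

/-- Squared Frobenius norm of a real matrix. -/
def frobSq {N : ℕ} (A : Matrix (Fin N) (Fin N) ℝ) : ℝ :=
  ∑ i, ∑ j, (A i j) ^ 2

lemma key_scalar (a S p q : ℝ) (ha : 0 ≤ a) (hS : a ^ 2 ≤ S) (hq : 0 < q)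
    (hpv : a ≠ 0 → p = S / a) (hS0 : a = 0 → S = 0) :
    1 - 2 * p⁻¹ * a + p⁻¹ ^ 2 * S ≤ 1 - 2 * q⁻¹ * a + q⁻¹ ^ 2 * S := by
  rcases eq_or_ne a 0 with h | h
  · simp [h, hS0 h]
  · have ha' : 0 < a := lt_of_le_of_ne ha (Ne.symm h)
    have hSpos : 0 < S := lt_of_lt_of_le (by positivity) hS
    have hp : p⁻¹ = a / S := by rw [hpv h, inv_div]
    rw [hp]
    have hq' : 0 < q⁻¹ := inv_pos.2 hq
    have hta : (a / S) * S = a := by field_simp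
    nlinarith [mul_nonneg hSpos.le (sq_nonneg (q⁻¹ - a / S)), hta]

/-- The SPAI diagonal preconditioner `P[i,i] = M²[i,i]/M[i,i]` (when `M[i,i] ≠ 0`,
arbitrary positive value otherwise) minimizes `‖Id − P⁻¹M‖_F²` over diagonal
positive matrices, where `M = Θᵀ Θ`. -/
theorem spai_diagonal_optimal {N : ℕ} (Θ : Matrix (Fin N) (Fin N) ℝ)
    (M : Matrix (Fin N) (Fin N) ℝ) (hM : M = Θᵀ * Θ)
    (P : Matrix (Fin N) (Fin N) ℝ) (hPdiag : P.IsDiag) (hPpos : ∀ i, 0 < P i i)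
    (hPval : ∀ i, M i i ≠ 0 → P i i = (M * M) i i / M i i) :
    ∀ Q : Matrix (Fin N) (Fin N) ℝ, Q.IsDiag → (∀ i, 0 < Q i i) →
      frobSq (1 - P⁻¹ * M) ≤ frobSq (1 - Q⁻¹ * M) := by
  intro Q hQdiag hQpos
  -- basic facts about M
  have happ : ∀ i j, M i j = ∑ k, Θ k i * Θ k j := by
    intro i j; rw [hM, Matrix.mul_apply]; simp [Matrix.transpose_apply]
  have hsym : ∀ i j, M j i = M i j := by
    intro i j; rw [happ, happ]; exact Finset.sum_congr rfl fun k _ => mul_comm _ _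
  have hdiag_nonneg : ∀ i, 0 ≤ M i i := by
    intro i; rw [happ]; exact Finset.sum_nonneg fun k _ => mul_self_nonneg _
  have hzero : ∀ i, M i i = 0 → ∀ j, M i j = 0 := by
    intro i h j
    have h0 : ∀ k ∈ Finset.univ, Θ k i * Θ k i = 0 := by
      have := (Finset.sum_eq_zero_iff_of_nonneg (fun k _ => mul_self_nonneg (Θ k i))).1
        ((happ i i) ▸ h)
      exact this
    rw [happ]
    refine Finset.sum_eq_zero fun k _ => ?_
    have : Θ k i = 0 := by
      have := h0 k (Finset.mem_univ k)
      nlinarith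
    simp [this]
  -- entries of inverses of diagonal matrices
  have hinv : ∀ (R : Matrix (Fin N) (Fin N) ℝ), R.IsDiag → (∀ i, 0 < R i i) →
      ∀ i j, (1 - R⁻¹ * M) i j = (if i = j then 1 else 0) - (R i i)⁻¹ * M i j := by
    intro R hRdiag hRpos i j
    have hR : R = Matrix.diagonal (fun i => R i i) := by
      ext a b
      by_cases h : a = b
      · simp [h, Matrix.diagonal]
      · simp [Matrix.diagonal, h, hRdiag h]
    have hRinv : R⁻¹ = Matrix.diagonal (fun i => (R i i)⁻¹) := by
      refine Matrix.inv_eq_right_inv ?_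
      ext a b
      rw [Matrix.mul_diagonal]
      by_cases h : a = b
      · subst h; simp [mul_inv_cancel₀ (hRpos a).ne']
      · simp [hRdiag h, Matrix.one_apply_ne h]
    rw [hRinv]
    simp [Matrix.sub_apply, Matrix.diagonal_mul, Matrix.one_apply]
  -- per-row sums
  have hrow : ∀ (t : ℝ) i,
      ∑ j, ((if i = j then (1:ℝ) else 0) - t * M i j) ^ 2
        = 1 - 2 * t * M i i + t ^ 2 * ∑ j, (M i j) ^ 2 := by
    intro t i
    have : ∀ j, ((if i = j then (1:ℝ) else 0) - t * M i j) ^ 2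
        = ((if i = j then (1:ℝ) else 0) - (if i = j then 2 * t * M i j else 0))
          + t ^ 2 * (M i j) ^ 2 := by
      intro j; by_cases h : i = j <;> simp [h] <;> ring
    simp_rw [this, Finset.sum_add_distrib, Finset.sum_sub_distrib, Finset.sum_ite_eq,
      ← Finset.mul_sum]
    simp
  unfold frobSq
  refine Finset.sum_le_sum fun i _ => ?_
  simp_rw [hinv P hPdiag hPpos, hinv Q hQdiag hQpos, hrow]
  refine key_scalar (M i i) (∑ j, (M i j) ^ 2) (P i i) (Q i i) (hdiag_nonneg i) ?_ (hQpos i)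
    ?_ ?_
  · calc (M i i) ^ 2 ≤ ∑ j ∈ {i}, (M i j) ^ 2 := by simp
      _ ≤ ∑ j, (M i j) ^ 2 := Finset.sum_le_sum_of_subset_of_nonneg (by simp)
          (fun j _ _ => sq_nonneg _)
  · intro h
    rw [hPval i h]
    congr 1
    rw [Matrix.mul_apply]
    exact Finset.sum_congr rfl fun j _ => by rw [hsym j i]; ring
  · intro h
    exact Finset.sum_eq_zero fun j _ => by rw [hzero i h j]; ring
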